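/- If a triangle-free graph on n vertices has exactly ⌊n²/4⌋ edges, then it is bipartite. -/

import Mathlib

/-!
Turán's theorem for `r = 2`: a triangle-free graph on `n` vertices has at most
`#(turanGraph n 2).edgeFinset = ⌊n²/4⌋` edges, so a triangle-free graph attaining this bound is
Turán-maximal, hence isomorphic to `turanGraph n 2`, which is properly coloured by the parity of
the vertex index.
-/

open Finset SimpleGraph

namespace SimpleGraph

variable {V : Type*} [Fintype V]

theorem card_edgeFinset_turanGraph_two (n : ℕ) : #(turanGraph n 2).edgeFinset = n ^ 2 / 4 := by
  rw [card_edgeFinset_turanGraph]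
  obtain ⟨k, rfl | rfl⟩ := Nat.even_or_odd' n
  · have hsq : (2 * k) ^ 2 = 4 * k ^ 2 := by ring
    simp [hsq]
  · have hsq : (2 * k + 1) ^ 2 = 4 * (k ^ 2 + k) + 1 := by ring
    simp [hsq, Nat.add_mod]
    omega

theorem turanGraph_colorable {n r : ℕ} (hr : 0 < r) : (turanGraph n r).Colorable r :=
  ⟨Coloring.mk (fun v ↦ ⟨v % r, Nat.mod_lt _ hr⟩) fun hadj heq ↦ hadj (Fin.val_eq_of_eq heq)⟩

theorem isTuranMaximal_of_card_edgeFinset_eq {G : SimpleGraph V} [DecidableRel G.Adj] {r : ℕ}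
    (hG : G.CliqueFree (r + 1))
    (hcard : #G.edgeFinset = #(turanGraph (Fintype.card V) r).edgeFinset) :
    G.IsTuranMaximal r := by
  refine ⟨hG, fun H _ hH ↦ ?_⟩
  rw [hcard, card_edgeFinset_turanGraph]
  exact hH.card_edgeFinset_le

theorem IsBipartite.exists_finset_mem_iff_notMem_of_adj {G : SimpleGraph V} (hG : G.IsBipartite) :
    ∃ A : Finset V, ∀ u v, G.Adj u v → (u ∈ A ↔ v ∉ A) := by
  classical
  obtain ⟨c⟩ := hG
  refine ⟨univ.filter (c · = 0), fun u v huv ↦ ?_⟩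
  have hne := c.valid huv
  simp only [mem_filter, mem_univ, true_and]
  omega

end SimpleGraph

theorem mantel_extremal_bipartite (n : ℕ) (G : SimpleGraph (Fin n)) [DecidableRel G.Adj]
    (h : G.CliqueFree 3) (hcard : G.edgeFinset.card = n ^ 2 / 4) :
    ∃ A : Finset (Fin n), ∀ u v, G.Adj u v → (u ∈ A ↔ v ∉ A) := by
  have hmax : G.IsTuranMaximal 2 := isTuranMaximal_of_card_edgeFinset_eq h <| by
    rw [hcard, Fintype.card_fin, card_edgeFinset_turanGraph_two]
  obtain ⟨f⟩ := hmax.nonempty_iso_turanGraph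
  exact IsBipartite.exists_finset_mem_iff_notMem_of_adj <|
    (turanGraph_colorable two_pos).of_hom f.toHom
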